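/- Let h(φ) := log 2 − 1 + cos φ − (φ/2)·sin(2φ) − cos(2φ)·log(2 cos(φ/2)). Then h(φ) > 0 for all real φ with 3 ≤ φ < π. -/

import Mathlib

open Real

/-! On `[3, π)` the term `-(φ/2) sin 2φ` is nonnegative and `cos 2φ ≥ 1 - 2(π - φ)² > 0.95`, while
`2 cos(φ/2) ≤ π - φ < 1/4` makes `log(2 cos(φ/2)) ≤ -2 log 2`. With `cos φ ≥ -1` this leaves
`h(φ) ≥ 2.91 log 2 - 2 > 0`. -/

namespace Real

lemma cos_le_pi_div_two_sub {x : ℝ} (hx : x ≤ π / 2) : cos x ≤ π / 2 - x := by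
  simpa only [sin_pi_div_two_sub] using sin_le (x := π / 2 - x) (by linarith)

lemma one_sub_two_mul_sq_le_cos_two_mul (φ : ℝ) : 1 - 2 * (π - φ) ^ 2 ≤ cos (2 * φ) := by
  rw [← cos_two_pi_sub]
  linarith [one_sub_sq_div_two_le_cos (x := 2 * π - 2 * φ)]

lemma sin_two_mul_nonpos {φ : ℝ} (h₁ : π / 2 ≤ φ) (h₂ : φ ≤ π) : sin (2 * φ) ≤ 0 := by
  rw [← sin_sub_two_pi]
  exact sin_nonpos_of_nonpos_of_neg_pi_le (by linarith) (by linarith)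

lemma log_two_mul_cos_half_le_log_pi_sub {φ : ℝ} (h₁ : -π < φ) (h₂ : φ < π) :
    log (2 * cos (φ / 2)) ≤ log (π - φ) := by
  have hpos : 0 < cos (φ / 2) := cos_pos_of_mem_Ioo ⟨by linarith, by linarith⟩
  apply log_le_log (by positivity)
  linarith [cos_le_pi_div_two_sub (x := φ / 2) (by linarith)]

end Real

theorem stmt_4 (φ : ℝ) (h1 : 3 ≤ φ) (h2 : φ < π) :
    0 < Real.log 2 - 1 + Real.cos φ - (φ / 2) * Real.sin (2 * φ)
      - Real.cos (2 * φ) * Real.log (2 * Real.cos (φ / 2)) := by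
  have hπ : π < 3.15 := pi_lt_d2
  have hlog2 : 0.6931471803 < log 2 := log_two_gt_d9
  have hsin : (φ / 2) * sin (2 * φ) ≤ 0 :=
    mul_nonpos_of_nonneg_of_nonpos (by linarith) (sin_two_mul_nonpos (by linarith) h2.le)
  have hcos : 0.955 ≤ cos (2 * φ) := by
    nlinarith [one_sub_two_mul_sq_le_cos_two_mul φ]
  have hlog : log (2 * cos (φ / 2)) ≤ -(2 * log 2) :=
    calc log (2 * cos (φ / 2)) ≤ log (π - φ) :=
          log_two_mul_cos_half_le_log_pi_sub (by linarith) h2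
      _ ≤ log (2 ^ 2)⁻¹ := log_le_log (by linarith) (by norm_num; linarith)
      _ = -(2 * log 2) := by rw [log_inv, log_pow]; push_cast; ring
  have hprod : cos (2 * φ) * log (2 * cos (φ / 2)) ≤ 0.955 * log (2 * cos (φ / 2)) :=
    mul_le_mul_of_nonpos_right hcos (by linarith)
  linarith [neg_one_le_cos φ]
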